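/- Let H be a Hopf algebra over a field k. The category YD(H) of left-left Yetter-Drinfeld modules over H is isomorphic (as a category, and as a braided monoidal category) to the Drinfeld center Z(Rep(H)) of the category of left H-modules: the functor sending a half-braiding (V, c) to V with coaction Δ_V(v) = c⁻¹_H(1_H ⊗ v) ∈ V ⊗ H, and the functor sending a Yetter-Drinfeld module (V, Δ_V) to V with half-braiding c_X(v⊗x) = s(v_{(1)})x ⊗ v_{(V)}, are mutually inverse. -/

import Mathlib

open TensorProduct

universe u

variable (k : Type u) [Field k] (H : Type u) [Ring H] [HopfAlgebra k H]

/-- The Yetter–Drinfeld crossing condition for a left `H`-module (action `aV`)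
and left `H`-comodule (coaction `ΔV`) `V`: as linear maps `H ⊗ V → V ⊗ H`,
`h' v_{(V)} ⊗ h'' v_{(1)} = (h'' v)_{(V)} ⊗ (h'' v)_{(1)} h'`. -/
def YDCrossing (V : Type u) [AddCommGroup V] [Module k V]
    (aV : H →ₗ[k] V →ₗ[k] V) (ΔV : V →ₗ[k] V ⊗[k] H) : Prop :=
  (TensorProduct.map (TensorProduct.lift aV) (LinearMap.mul' k H)) ∘ₗ
      (TensorProduct.tensorTensorTensorComm k H H V H).toLinearMap ∘ₗ
      (TensorProduct.map (Coalgebra.comul (R := k)) ΔV) =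
    (TensorProduct.map LinearMap.id (LinearMap.mul' k H)) ∘ₗ
      (TensorProduct.assoc k V H H).toLinearMap ∘ₗ
      (TensorProduct.comm k H (V ⊗[k] H)).toLinearMap ∘ₗ
      (TensorProduct.map LinearMap.id ΔV) ∘ₗ
      (TensorProduct.map LinearMap.id (TensorProduct.lift aV)) ∘ₗ
      (TensorProduct.assoc k H H V).toLinearMap ∘ₗ
      (TensorProduct.map (Coalgebra.comul (R := k)) LinearMap.id)

/-- Coassociativity of a comodule coaction. -/
def YDCoassoc (V : Type u) [AddCommGroup V] [Module k V]
    (ΔV : V →ₗ[k] V ⊗[k] H) : Prop :=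
  (TensorProduct.assoc k V H H).toLinearMap ∘ₗ
      (TensorProduct.map ΔV LinearMap.id) ∘ₗ ΔV =
    (TensorProduct.map LinearMap.id (Coalgebra.comul (R := k))) ∘ₗ ΔV

/-- Counitarity of a comodule coaction. -/
def YDCounital (V : Type u) [AddCommGroup V] [Module k V]
    (ΔV : V →ₗ[k] V ⊗[k] H) : Prop :=
  (TensorProduct.rid k V).toLinearMap ∘ₗ
      (TensorProduct.map LinearMap.id (Coalgebra.counit (R := k))) ∘ₗ ΔV =
    LinearMap.id

/-- Unitality and multiplicativity of a module action. -/
def IsAction (V : Type u) [AddCommGroup V] [Module k V]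
    (aV : H →ₗ[k] V →ₗ[k] V) : Prop :=
  (∀ v : V, aV 1 v = v) ∧ (∀ (g h : H) (v : V), aV (g * h) v = aV g (aV h v))

/-- The diagonal (comultiplication) action of `H` on a tensor product of two
modules with actions `aM`, `aN` (given as linear maps `H ⊗ M → M`). -/
noncomputable def tAct {k : Type u} [Field k] {H : Type u} [Ring H] [HopfAlgebra k H]
    {M N : Type u} [AddCommGroup M] [Module k M] [AddCommGroup N] [Module k N]
    (aM : H ⊗[k] M →ₗ[k] M) (aN : H ⊗[k] N →ₗ[k] N) :
    H ⊗[k] (M ⊗[k] N) →ₗ[k] M ⊗[k] N :=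
  (TensorProduct.map aM aN) ∘ₗ
    (TensorProduct.tensorTensorTensorComm k H H M N).toLinearMap ∘ₗ
    (TensorProduct.map (Coalgebra.comul (R := k)) LinearMap.id)

/-- The half-braiding `c_X(v ⊗ x) = s(v_{(1)}) x ⊗ v_{(V)}` associated with a
Yetter-Drinfeld coaction `ΔV` and a module `X` with action `aX`. -/
noncomputable def ydHalfBraiding {k : Type u} [Field k] {H : Type u} [Ring H]
    [HopfAlgebra k H] {V X : Type u}
    [AddCommGroup V] [Module k V] [AddCommGroup X] [Module k X]
    (ΔV : V →ₗ[k] V ⊗[k] H) (aX : H ⊗[k] X →ₗ[k] X) :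
    V ⊗[k] X →ₗ[k] X ⊗[k] V :=
  (TensorProduct.comm k V X).toLinearMap ∘ₗ
    (TensorProduct.map LinearMap.id
      (aX ∘ₗ (TensorProduct.map (HopfAlgebra.antipode (R := k)) LinearMap.id))) ∘ₗ
    (TensorProduct.assoc k V H X).toLinearMap ∘ₗ
    (TensorProduct.map ΔV LinearMap.id)

/-- The candidate inverse `ĉ_X(x ⊗ v) = v_{(V)} ⊗ v_{(1)} x`. -/
noncomputable def ydHalfBraidingInv {k : Type u} [Field k] {H : Type u} [Ring H]
    [HopfAlgebra k H] {V X : Type u}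
    [AddCommGroup V] [Module k V] [AddCommGroup X] [Module k X]
    (ΔV : V →ₗ[k] V ⊗[k] H) (aX : H ⊗[k] X →ₗ[k] X) :
    X ⊗[k] V →ₗ[k] V ⊗[k] X :=
  (TensorProduct.map LinearMap.id aX) ∘ₗ
    (TensorProduct.assoc k V H X).toLinearMap ∘ₗ
    (TensorProduct.map ΔV LinearMap.id) ∘ₗ
    (TensorProduct.comm k X V).toLinearMap

/-- A half-braiding on a `k`-module `V` with `H`-action `aV`, relative to the
category of left `H`-modules: a family of `H`-linear isomorphisms
`c_X : V ⊗ X → X ⊗ V`, natural in `X`, satisfying the half-braiding axiom. -/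
def IsHalfBraiding {k : Type u} [Field k] {H : Type u} [Ring H] [HopfAlgebra k H]
    (V : Type u) [AddCommGroup V] [Module k V] (aV : H →ₗ[k] V →ₗ[k] V)
    (c : ∀ (X : Type u) [AddCommGroup X] [Module k X],
      (H ⊗[k] X →ₗ[k] X) → (V ⊗[k] X →ₗ[k] X ⊗[k] V)) : Prop :=
  (∀ (X : Type u) [AddCommGroup X] [Module k X] (aX : H ⊗[k] X →ₗ[k] X),
    (∀ x : X, aX (1 ⊗ₜ x) = x) →
    (∀ (g h : H) (x : X), aX ((g * h) ⊗ₜ x) = aX (g ⊗ₜ aX (h ⊗ₜ x))) →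
    Function.Bijective (c X aX)) ∧
  (∀ (X : Type u) [AddCommGroup X] [Module k X] (aX : H ⊗[k] X →ₗ[k] X),
    (∀ x : X, aX (1 ⊗ₜ x) = x) →
    (∀ (g h : H) (x : X), aX ((g * h) ⊗ₜ x) = aX (g ⊗ₜ aX (h ⊗ₜ x))) →
    c X aX ∘ₗ tAct (TensorProduct.lift aV) aX =
      tAct aX (TensorProduct.lift aV) ∘ₗ
        (TensorProduct.map LinearMap.id (c X aX))) ∧
  (∀ (X Y : Type u) [AddCommGroup X] [Module k X] [AddCommGroup Y] [Module k Y]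
      (aX : H ⊗[k] X →ₗ[k] X) (aY : H ⊗[k] Y →ₗ[k] Y) (f : X →ₗ[k] Y),
    (∀ (h : H) (x : X), f (aX (h ⊗ₜ x)) = aY (h ⊗ₜ f x)) →
    (TensorProduct.map f LinearMap.id) ∘ₗ c X aX =
      c Y aY ∘ₗ (TensorProduct.map LinearMap.id f)) ∧
  (∀ (X Y : Type u) [AddCommGroup X] [Module k X] [AddCommGroup Y] [Module k Y]
      (aX : H ⊗[k] X →ₗ[k] X) (aY : H ⊗[k] Y →ₗ[k] Y),
    c (X ⊗[k] Y) (tAct aX aY) =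
      (TensorProduct.assoc k X Y V).symm.toLinearMap ∘ₗ
        (TensorProduct.map LinearMap.id (c Y aY)) ∘ₗ
        (TensorProduct.assoc k X V Y).toLinearMap ∘ₗ
        (TensorProduct.map (c X aX) LinearMap.id) ∘ₗ
        (TensorProduct.assoc k V X Y).symm.toLinearMap)

/-!
A half-braiding `c` is determined by its component `c_H` at the regular module, because every
module `X` receives the `H`-linear maps `h ↦ h • x`; so `c` is encoded by `Δ v = c_H⁻¹ (1 ⊗ v)`.
Naturality of `c` for `ε : H → k` and for `Δ : H → H ⊗ H` (with the tensor axiom), and the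
`H`-linearity of `c_H`, become counitality, coassociativity and the crossing condition of `Δ`.
Conversely, `v ⊗ x ↦ s(v₍₁₎) x ⊗ v₍₀₎` is inverted by `x ⊗ v ↦ v₍₀₎ ⊗ v₍₁₎ x`, its
`H`-linearity is the crossing condition, and its compatibility with tensor products is the
identity `Δ ∘ s = (s ⊗ s) ∘ τ ∘ Δ`.
-/

open Coalgebra HopfAlgebra WithConv

namespace HopfAlgebra

variable {R A B : Type*} [CommSemiring R] [Semiring A] [HopfAlgebra R A] [Semiring B] [Algebra R B]

open Algebra.TensorProduct in
lemma convMul_includeLeft_includeRight (f g : A →ₗ[R] A) :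
    toConv ((includeLeft (S := R) (B := A)).toLinearMap ∘ₗ f) *
        toConv ((includeRight (A := A)).toLinearMap ∘ₗ g) = toConv (map f g ∘ₗ comul) := by
  apply WithConv.ext
  rw [LinearMap.convMul_def, ← LinearMap.comp_assoc]
  refine congrArg (· ∘ₗ comul) (TensorProduct.ext' fun x y => ?_)
  simp

open Algebra.TensorProduct in
lemma convMul_includeRight_includeLeft (f g : A →ₗ[R] A) :
    toConv ((includeRight (A := A)).toLinearMap ∘ₗ g) *
        toConv ((includeLeft (S := R) (B := A)).toLinearMap ∘ₗ f) =
      toConv (map f g ∘ₗ (TensorProduct.comm R A A).toLinearMap ∘ₗ comul) := by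
  apply WithConv.ext
  rw [LinearMap.convMul_def, ← LinearMap.comp_assoc, ← LinearMap.comp_assoc]
  refine congrArg (· ∘ₗ comul) (TensorProduct.ext' fun x y => ?_)
  simp

lemma algHom_comp_antipode_convMul (φ : A →ₐ[R] B) :
    toConv (φ.toLinearMap ∘ₗ antipode R) * toConv φ.toLinearMap = 1 := by
  have h := LinearMap.algHom_comp_convMul_distrib φ (toConv (antipode R)) (toConv LinearMap.id)
  rw [LinearMap.antipode_mul_id] at h
  simp only [LinearMap.comp_id] at h
  apply WithConv.ext
  rw [← h]
  ext a
  simp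

open Algebra.TensorProduct in
/-- Writing `δ = ι₁ * ι₂` and `(S ⊗ S) ∘ τ ∘ δ = (ι₂ ∘ S) * (ι₁ ∘ S)` in the convolution algebra
`A →ₗ A ⊗ A`, the latter is a left inverse of `δ`, while `δ ∘ S` is a right inverse. -/
theorem comul_comp_antipode :
    comul ∘ₗ antipode R (A := A) =
      map (antipode R) (antipode R) ∘ₗ (TensorProduct.comm R A A).toLinearMap ∘ₗ comul := by
  have hδ : toConv ((includeLeft (S := R) (B := A)).toLinearMap ∘ₗ LinearMap.id) *
      toConv ((includeRight (A := A)).toLinearMap ∘ₗ LinearMap.id) = toConv comul := by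
    rw [convMul_includeLeft_includeRight, TensorProduct.map_id, LinearMap.id_comp]
  have hleft : toConv (map (antipode R) (antipode R) ∘ₗ
      (TensorProduct.comm R A A).toLinearMap ∘ₗ comul) * toConv comul = 1 := by
    rw [← convMul_includeRight_includeLeft, ← hδ]
    simp only [LinearMap.comp_id, mul_assoc]
    rw [← mul_assoc (toConv (_ ∘ₗ antipode R)) (toConv (includeLeft (S := R) (B := A)).toLinearMap),
      algHom_comp_antipode_convMul, one_mul, algHom_comp_antipode_convMul]
  exact congrArg ofConv (left_inv_eq_right_inv hleft LinearMap.comul_right_inv).symm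

end HopfAlgebra

namespace YetterDrinfeld

variable {k H}

/-- Sweedler notation: a chosen presentation `t = ∑ p.1 ⊗ p.2` of a tensor. -/
noncomputable def rep {M N : Type*} [AddCommGroup M] [Module k M] [AddCommGroup N] [Module k N]
    (t : M ⊗[k] N) : Finset (M × N) :=
  (TensorProduct.exists_finset t).choose

lemma sum_rep {M N : Type*} [AddCommGroup M] [Module k M] [AddCommGroup N] [Module k N]
    (t : M ⊗[k] N) : ∑ p ∈ rep t, p.1 ⊗ₜ[k] p.2 = t :=
  (TensorProduct.exists_finset t).choose_spec.symm

lemma sum_mul_antipode (b : H) :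
    ∑ p ∈ rep (comul (R := k) b), p.1 * antipode k p.2 = algebraMap k H (counit b) :=
  sum_mul_antipode_eq_algebraMap_counit (ℛ k b)

lemma sum_antipode_mul (b : H) :
    ∑ p ∈ rep (comul (R := k) b), antipode k p.1 * p.2 = algebraMap k H (counit b) :=
  sum_antipode_mul_eq_algebraMap_counit (ℛ k b)

lemma comul_antipode (b : H) :
    comul (R := k) (antipode k b) =
      ∑ p ∈ rep (comul (R := k) b), antipode k p.2 ⊗ₜ antipode k p.1 := by
  have h := LinearMap.congr_fun (comul_comp_antipode (R := k) (A := H)) b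
  conv_rhs at h => rw [LinearMap.comp_apply, LinearMap.comp_apply, ← sum_rep (comul b)]
  simpa [map_sum] using h

lemma tAct_tmul {M N : Type u} [AddCommGroup M] [Module k M] [AddCommGroup N] [Module k N]
    (aM : H ⊗[k] M →ₗ[k] M) (aN : H ⊗[k] N →ₗ[k] N) {ι : Type*} {s : Finset ι} {F G : ι → H}
    {h : H} (hs : comul (R := k) h = ∑ i ∈ s, F i ⊗ₜ[k] G i) (x : M) (y : N) :
    tAct aM aN (h ⊗ₜ[k] (x ⊗ₜ[k] y)) = ∑ i ∈ s, aM (F i ⊗ₜ[k] x) ⊗ₜ[k] aN (G i ⊗ₜ[k] y) := by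
  simp [tAct, hs, TensorProduct.sum_tmul, map_sum]

lemma mul'_one_tmul (x : H) : LinearMap.mul' k H ((1 : H) ⊗ₜ[k] x) = x := by
  simp

lemma mul'_mul_tmul (g h x : H) :
    LinearMap.mul' k H ((g * h) ⊗ₜ[k] x) =
      LinearMap.mul' k H (g ⊗ₜ[k] LinearMap.mul' k H (h ⊗ₜ[k] x)) := by
  simp [mul_assoc]

lemma tAct_mul'_mul' (h : H) (t : H ⊗[k] H) :
    tAct (LinearMap.mul' k H) (LinearMap.mul' k H) (h ⊗ₜ[k] t) = comul (R := k) h * t := by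
  induction t with
  | zero => simp
  | add a b ha hb => rw [TensorProduct.tmul_add, map_add, ha, hb, mul_add]
  | tmul y z =>
    conv_rhs => rw [← sum_rep (comul h), Finset.sum_mul]
    simp [tAct_tmul _ _ (sum_rep (comul (R := k) (A := H) h)).symm,
      Algebra.TensorProduct.tmul_mul_tmul]

lemma tAct_mul'_mul'_one_tmul (t : H ⊗[k] H) :
    tAct (LinearMap.mul' k H) (LinearMap.mul' k H) ((1 : H) ⊗ₜ[k] t) = t := by
  rw [tAct_mul'_mul', Bialgebra.comul_one, one_mul]

lemma tAct_mul'_mul'_mul_tmul (g h : H) (t : H ⊗[k] H) :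
    tAct (LinearMap.mul' k H) (LinearMap.mul' k H) ((g * h) ⊗ₜ[k] t) =
      tAct (LinearMap.mul' k H) (LinearMap.mul' k H)
        (g ⊗ₜ[k] tAct (LinearMap.mul' k H) (LinearMap.mul' k H) (h ⊗ₜ[k] t)) := by
  rw [tAct_mul'_mul', tAct_mul'_mul', tAct_mul'_mul', Bialgebra.comul_mul, mul_assoc]

noncomputable def counitAct : H ⊗[k] k →ₗ[k] k :=
  counit ∘ₗ (TensorProduct.rid k H).toLinearMap

lemma counitAct_tmul (h : H) (l : k) : counitAct (h ⊗ₜ[k] l) = l * counit (R := k) h := by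
  simp [counitAct]

lemma counitAct_one_tmul (l : k) : counitAct ((1 : H) ⊗ₜ[k] l) = l := by
  simp [counitAct_tmul]

lemma counitAct_mul_tmul (g h : H) (l : k) :
    counitAct ((g * h) ⊗ₜ[k] l) = counitAct (g ⊗ₜ[k] counitAct (h ⊗ₜ[k] l)) := by
  simp only [counitAct_tmul, Bialgebra.counit_mul]
  ring

lemma sum_counit_mul_counit (h : H) :
    ∑ d ∈ rep (comul (R := k) h), counit (R := k) d.1 * counit (R := k) d.2 = counit h := by
  have hsum : ∑ d ∈ rep (comul (R := k) h), counit (R := k) d.1 • d.2 = h :=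
    sum_counit_smul (ℛ k h)
  simpa [smul_eq_mul] using congrArg (counit (R := k)) hsum

lemma lid_symm_counitAct (h : H) (l : k) :
    (TensorProduct.lid k k).symm (counitAct (h ⊗ₜ l)) =
      tAct counitAct counitAct (h ⊗ₜ (TensorProduct.lid k k).symm l) := by
  have hkk : ∀ a b : k, (a ⊗ₜ[k] b : k ⊗[k] k) = (1 : k) ⊗ₜ[k] (a * b) := fun a b => by
    rw [← smul_eq_mul a b, TensorProduct.tmul_smul, TensorProduct.smul_tmul', smul_eq_mul, mul_one]
  simp only [TensorProduct.lid_symm_apply, tAct_tmul _ _ (sum_rep (comul (R := k) (A := H) h)).symm,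
    counitAct_tmul, one_mul, hkk, ← TensorProduct.tmul_sum]
  rw [← sum_counit_mul_counit h, Finset.mul_sum, one_mul, one_mul]
  exact congrArg _ (Finset.sum_congr rfl fun d _ => by ring)

end YetterDrinfeld

section Comodule

open YetterDrinfeld

variable {k H} {V : Type u} [AddCommGroup V] [Module k V] {ΔV : V →ₗ[k] V ⊗[k] H}

lemma YDCoassoc.sweedler_eq (hco : YDCoassoc k H V ΔV) (v : V) :
    ∑ p ∈ rep (ΔV v), ∑ q ∈ rep (ΔV p.1), q.1 ⊗ₜ[k] (q.2 ⊗ₜ[k] p.2) =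
      ∑ p ∈ rep (ΔV v), ∑ r ∈ rep (comul (R := k) p.2), p.1 ⊗ₜ[k] (r.1 ⊗ₜ[k] r.2) := by
  have h := LinearMap.congr_fun hco v
  simp only [LinearMap.coe_comp, Function.comp_apply, LinearEquiv.coe_coe] at h
  rw [← sum_rep (ΔV v)] at h
  simp only [map_sum, TensorProduct.map_tmul, LinearMap.id_coe, id_eq] at h
  refine (Finset.sum_congr rfl fun p _ => ?_).trans (h.trans (Finset.sum_congr rfl fun p _ => ?_))
  · conv_rhs => rw [← sum_rep (ΔV p.1), TensorProduct.sum_tmul, map_sum]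
    simp only [TensorProduct.assoc_tmul]
  · conv_lhs => rw [← sum_rep (comul p.2), TensorProduct.tmul_sum]

lemma YDCounital.sum_counit_smul (hcu : YDCounital k H V ΔV) (v : V) :
    ∑ p ∈ rep (ΔV v), counit (R := k) p.2 • p.1 = v := by
  have h := LinearMap.congr_fun hcu v
  simp only [LinearMap.coe_comp, Function.comp_apply, LinearEquiv.coe_coe, LinearMap.id_coe,
    id_eq] at h
  rw [← sum_rep (ΔV v)] at h
  simpa [map_sum] using h

lemma YDCrossing.sweedler_eq {aV : H →ₗ[k] V →ₗ[k] V} (hcr : YDCrossing k H V aV ΔV)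
    (h : H) (v : V) :
    ∑ d ∈ rep (comul (R := k) h), ∑ p ∈ rep (ΔV v), aV d.1 p.1 ⊗ₜ[k] (d.2 * p.2) =
      ∑ d ∈ rep (comul (R := k) h), ∑ q ∈ rep (ΔV (aV d.2 v)), q.1 ⊗ₜ[k] (q.2 * d.1) := by
  have hh := LinearMap.congr_fun hcr (h ⊗ₜ[k] v)
  simp only [LinearMap.coe_comp, Function.comp_apply, LinearEquiv.coe_coe,
    TensorProduct.map_tmul, LinearMap.id_coe, id_eq] at hh
  rw [← sum_rep (comul h), ← sum_rep (ΔV v)] at hh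
  simp only [TensorProduct.sum_tmul, TensorProduct.tmul_sum, map_sum,
    TensorProduct.tensorTensorTensorComm_tmul, TensorProduct.map_tmul,
    TensorProduct.lift.tmul, LinearMap.mul'_apply, LinearMap.id_coe, id_eq,
    TensorProduct.assoc_tmul, TensorProduct.comm_tmul] at hh
  rw [Finset.sum_comm, hh]
  refine Finset.sum_congr rfl fun d _ => ?_
  conv_lhs => rw [← sum_rep (ΔV (aV d.2 v)), TensorProduct.sum_tmul, map_sum, map_sum]
  simp

end Comodule

section Natural

variable {k H} {V : Type u} [AddCommGroup V] [Module k V]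

def IsNaturalFamily
    (c : ∀ (X : Type u) [AddCommGroup X] [Module k X],
      (H ⊗[k] X →ₗ[k] X) → (V ⊗[k] X →ₗ[k] X ⊗[k] V)) : Prop :=
  ∀ (X Y : Type u) [AddCommGroup X] [Module k X] [AddCommGroup Y] [Module k Y]
    (aX : H ⊗[k] X →ₗ[k] X) (aY : H ⊗[k] Y →ₗ[k] Y) (f : X →ₗ[k] Y),
    (∀ (h : H) (x : X), f (aX (h ⊗ₜ x)) = aY (h ⊗ₜ f x)) →
    TensorProduct.map f LinearMap.id ∘ₗ c X aX = c Y aY ∘ₗ TensorProduct.map LinearMap.id f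

variable {c c' : ∀ (X : Type u) [AddCommGroup X] [Module k X],
  (H ⊗[k] X →ₗ[k] X) → (V ⊗[k] X →ₗ[k] X ⊗[k] V)}

lemma IsNaturalFamily.apply_map_mulRight (hc : IsNaturalFamily c) (a : H) (t : V ⊗[k] H) :
    c H (LinearMap.mul' k H) (TensorProduct.map LinearMap.id (LinearMap.mulRight k a) t) =
      TensorProduct.map (LinearMap.mulRight k a) LinearMap.id (c H (LinearMap.mul' k H) t) :=
  (LinearMap.congr_fun (hc H H _ _ (LinearMap.mulRight k a) fun h x => by simp [mul_assoc]) t).symm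

lemma IsNaturalFamily.eq_of_regular (hc : IsNaturalFamily c) (hc' : IsNaturalFamily c')
    (hreg : c H (LinearMap.mul' k H) = c' H (LinearMap.mul' k H))
    {X : Type u} [AddCommGroup X] [Module k X] (aX : H ⊗[k] X →ₗ[k] X)
    (hone : ∀ x : X, aX (1 ⊗ₜ x) = x)
    (hmul : ∀ (g h : H) (x : X), aX ((g * h) ⊗ₜ x) = aX (g ⊗ₜ aX (h ⊗ₜ x))) :
    c X aX = c' X aX := by
  refine TensorProduct.ext' fun v x => ?_
  have hlin : ∀ (g h : H), (aX ∘ₗ (TensorProduct.mk k H X).flip x) (LinearMap.mul' k H (g ⊗ₜ h)) =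
      aX (g ⊗ₜ (aX ∘ₗ (TensorProduct.mk k H X).flip x) h) := fun g h => by simp [hmul]
  have hvx : v ⊗ₜ[k] x = TensorProduct.map LinearMap.id
      (aX ∘ₗ (TensorProduct.mk k H X).flip x) (v ⊗ₜ[k] (1 : H)) := by simp [hone]
  have hnat := LinearMap.congr_fun (hc _ _ _ _ _ hlin) (v ⊗ₜ 1)
  have hnat' := LinearMap.congr_fun (hc' _ _ _ _ _ hlin) (v ⊗ₜ 1)
  rw [LinearMap.comp_apply, LinearMap.comp_apply] at hnat hnat'
  rw [hvx, ← hnat, ← hnat', hreg]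

end Natural

namespace YetterDrinfeld

variable {k H} {V : Type u} [AddCommGroup V] [Module k V] {ΔV : V →ₗ[k] V ⊗[k] H}

section Action

variable {X : Type u} [AddCommGroup X] [Module k X] (aX : H ⊗[k] X →ₗ[k] X)

lemma ydHalfBraiding_tmul {ι : Type*} {s : Finset ι} {F : ι → V} {G : ι → H} {v : V}
    (hs : ΔV v = ∑ i ∈ s, F i ⊗ₜ[k] G i) (x : X) :
    ydHalfBraiding ΔV aX (v ⊗ₜ[k] x) = ∑ i ∈ s, aX (antipode k (G i) ⊗ₜ[k] x) ⊗ₜ[k] F i := by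
  simp [ydHalfBraiding, hs, TensorProduct.sum_tmul, map_sum]

lemma ydHalfBraidingInv_tmul {ι : Type*} {s : Finset ι} {F : ι → V} {G : ι → H} {v : V}
    (hs : ΔV v = ∑ i ∈ s, F i ⊗ₜ[k] G i) (x : X) :
    ydHalfBraidingInv ΔV aX (x ⊗ₜ[k] v) = ∑ i ∈ s, F i ⊗ₜ[k] aX (G i ⊗ₜ[k] x) := by
  simp [ydHalfBraidingInv, hs, TensorProduct.sum_tmul, map_sum]

lemma ydHalfBraidingInv_ydHalfBraiding (hco : YDCoassoc k H V ΔV) (hcu : YDCounital k H V ΔV)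
    (hone : ∀ x : X, aX (1 ⊗ₜ x) = x)
    (hmul : ∀ (g h : H) (x : X), aX ((g * h) ⊗ₜ x) = aX (g ⊗ₜ aX (h ⊗ₜ x)))
    (t : V ⊗[k] X) :
    ydHalfBraidingInv ΔV aX (ydHalfBraiding ΔV aX t) = t := by
  induction t with
  | zero => simp
  | add a b ha hb => rw [map_add, map_add, ha, hb]
  | tmul v x =>
    rw [ydHalfBraiding_tmul aX (sum_rep (ΔV v)).symm, map_sum]
    have hexpand : ∀ p ∈ rep (ΔV v),
        ydHalfBraidingInv ΔV aX (aX (antipode k p.2 ⊗ₜ[k] x) ⊗ₜ[k] p.1) =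
        ∑ q ∈ rep (ΔV p.1), q.1 ⊗ₜ[k] aX ((q.2 * antipode k p.2) ⊗ₜ[k] x) := fun p _ => by
      rw [ydHalfBraidingInv_tmul aX (sum_rep (ΔV p.1)).symm]
      simp only [hmul]
    have hcontract : ∀ p ∈ rep (ΔV v),
        ∑ r ∈ rep (comul (R := k) p.2), p.1 ⊗ₜ[k] aX ((r.1 * antipode k r.2) ⊗ₜ[k] x) =
        (counit (R := k) p.2 • p.1) ⊗ₜ[k] x := fun p _ => by
      rw [← TensorProduct.tmul_sum, ← map_sum, ← TensorProduct.sum_tmul, sum_mul_antipode,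
        Algebra.algebraMap_eq_smul_one, ← TensorProduct.smul_tmul', map_smul, hone,
        TensorProduct.tmul_smul, TensorProduct.smul_tmul']
    have hco' := congrArg (TensorProduct.map (LinearMap.id (M := V))
      (aX ∘ₗ (TensorProduct.mk k H X).flip x ∘ₗ LinearMap.mul' k H ∘ₗ
        TensorProduct.map LinearMap.id (antipode k))) (hco.sweedler_eq v)
    simp only [map_sum, TensorProduct.map_tmul, LinearMap.id_coe, id_eq, LinearMap.coe_comp,
      Function.comp_apply, LinearMap.mul'_apply, TensorProduct.mk_apply,
      LinearMap.flip_apply] at hco'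
    rw [Finset.sum_congr rfl hexpand, hco', Finset.sum_congr rfl hcontract,
      ← TensorProduct.sum_tmul, hcu.sum_counit_smul]

lemma ydHalfBraiding_ydHalfBraidingInv (hco : YDCoassoc k H V ΔV) (hcu : YDCounital k H V ΔV)
    (hone : ∀ x : X, aX (1 ⊗ₜ x) = x)
    (hmul : ∀ (g h : H) (x : X), aX ((g * h) ⊗ₜ x) = aX (g ⊗ₜ aX (h ⊗ₜ x)))
    (t : X ⊗[k] V) :
    ydHalfBraiding ΔV aX (ydHalfBraidingInv ΔV aX t) = t := by
  induction t with
  | zero => simp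
  | add a b ha hb => rw [map_add, map_add, ha, hb]
  | tmul x v =>
    rw [ydHalfBraidingInv_tmul aX (sum_rep (ΔV v)).symm, map_sum]
    have hexpand : ∀ p ∈ rep (ΔV v),
        ydHalfBraiding ΔV aX (p.1 ⊗ₜ[k] aX (p.2 ⊗ₜ[k] x)) =
        ∑ q ∈ rep (ΔV p.1), aX ((antipode k q.2 * p.2) ⊗ₜ[k] x) ⊗ₜ[k] q.1 := fun p _ => by
      rw [ydHalfBraiding_tmul aX (sum_rep (ΔV p.1)).symm]
      simp only [hmul]
    have hcontract : ∀ p ∈ rep (ΔV v),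
        ∑ r ∈ rep (comul (R := k) p.2), aX ((antipode k r.1 * r.2) ⊗ₜ[k] x) ⊗ₜ[k] p.1 =
        x ⊗ₜ[k] (counit (R := k) p.2 • p.1) := fun p _ => by
      rw [← TensorProduct.sum_tmul, ← map_sum, ← TensorProduct.sum_tmul, sum_antipode_mul,
        Algebra.algebraMap_eq_smul_one, ← TensorProduct.smul_tmul', map_smul, hone,
        TensorProduct.smul_tmul]
    have hco' := congrArg ((TensorProduct.comm k V X).toLinearMap ∘ₗ
      TensorProduct.map (LinearMap.id (M := V))
        (aX ∘ₗ (TensorProduct.mk k H X).flip x ∘ₗ LinearMap.mul' k H ∘ₗ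
          TensorProduct.map (antipode k) LinearMap.id)) (hco.sweedler_eq v)
    simp only [map_sum, TensorProduct.map_tmul, LinearMap.id_coe, id_eq, LinearMap.coe_comp,
      Function.comp_apply, LinearMap.mul'_apply, TensorProduct.mk_apply, LinearEquiv.coe_coe,
      TensorProduct.comm_tmul, LinearMap.flip_apply] at hco'
    rw [Finset.sum_congr rfl hexpand, hco', Finset.sum_congr rfl hcontract,
      ← TensorProduct.tmul_sum, hcu.sum_counit_smul]

end Action

lemma ydHalfBraidingInv_comp_tAct {aV : H →ₗ[k] V →ₗ[k] V} (hcr : YDCrossing k H V aV ΔV)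
    {X : Type u} [AddCommGroup X] [Module k X] (aX : H ⊗[k] X →ₗ[k] X)
    (hmul : ∀ (g h : H) (x : X), aX ((g * h) ⊗ₜ x) = aX (g ⊗ₜ aX (h ⊗ₜ x))) :
    ydHalfBraidingInv ΔV aX ∘ₗ tAct aX (TensorProduct.lift aV) =
      tAct (TensorProduct.lift aV) aX ∘ₗ
        TensorProduct.map LinearMap.id (ydHalfBraidingInv ΔV aX) := by
  refine TensorProduct.ext' fun h t => ?_
  induction t with
  | zero => simp
  | add a b ha hb => simp only [TensorProduct.tmul_add, map_add] at ha hb ⊢; rw [ha, hb]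
  | tmul x v =>
    simp only [LinearMap.coe_comp, Function.comp_apply, TensorProduct.map_tmul, LinearMap.id_coe,
      id_eq, tAct_tmul _ _ (sum_rep (comul (R := k) (A := H) _)).symm, map_sum,
      TensorProduct.lift.tmul,
      ydHalfBraidingInv_tmul aX (sum_rep (ΔV _)).symm, TensorProduct.tmul_sum, ← hmul]
    rw [Finset.sum_comm]
    have hcr' := congrArg (TensorProduct.map (LinearMap.id (M := V))
      (aX ∘ₗ (TensorProduct.mk k H X).flip x)) (hcr.sweedler_eq h v)
    simp only [map_sum, TensorProduct.map_tmul, LinearMap.id_coe, id_eq, LinearMap.coe_comp,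
      Function.comp_apply, TensorProduct.mk_apply, LinearMap.flip_apply] at hcr'
    exact hcr'.symm

lemma ydHalfBraiding_comp_tAct (hco : YDCoassoc k H V ΔV) (hcu : YDCounital k H V ΔV)
    {aV : H →ₗ[k] V →ₗ[k] V} (hcr : YDCrossing k H V aV ΔV)
    {X : Type u} [AddCommGroup X] [Module k X] (aX : H ⊗[k] X →ₗ[k] X)
    (hone : ∀ x : X, aX (1 ⊗ₜ x) = x)
    (hmul : ∀ (g h : H) (x : X), aX ((g * h) ⊗ₜ x) = aX (g ⊗ₜ aX (h ⊗ₜ x))) :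
    ydHalfBraiding ΔV aX ∘ₗ tAct (TensorProduct.lift aV) aX =
      tAct aX (TensorProduct.lift aV) ∘ₗ
        TensorProduct.map LinearMap.id (ydHalfBraiding ΔV aX) := by
  refine LinearMap.ext fun u => ?_
  have hinv := LinearMap.congr_fun (ydHalfBraidingInv_comp_tAct hcr aX hmul)
    (TensorProduct.map LinearMap.id (ydHalfBraiding ΔV aX) u)
  have hcancel : ydHalfBraidingInv ΔV aX ∘ₗ ydHalfBraiding ΔV aX = LinearMap.id :=
    LinearMap.ext (ydHalfBraidingInv_ydHalfBraiding aX hco hcu hone hmul)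
  rw [LinearMap.comp_apply, LinearMap.comp_apply, TensorProduct.map_map, hcancel,
    LinearMap.comp_id, TensorProduct.map_id, LinearMap.id_apply] at hinv
  rw [LinearMap.comp_apply, LinearMap.comp_apply, ← hinv,
    ydHalfBraiding_ydHalfBraidingInv aX hco hcu hone hmul]

lemma isNaturalFamily_ydHalfBraiding (ΔV : V →ₗ[k] V ⊗[k] H) :
    IsNaturalFamily (fun _ _ _ aX => ydHalfBraiding ΔV aX) := fun _ _ _ _ _ _ aX aY _ hf =>
  TensorProduct.ext' fun v x => by
    simp [ydHalfBraiding_tmul aX (sum_rep (ΔV v)).symm,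
      ydHalfBraiding_tmul aY (sum_rep (ΔV v)).symm, hf]

lemma ydHalfBraiding_tAct (hco : YDCoassoc k H V ΔV)
    {X Y : Type u} [AddCommGroup X] [Module k X] [AddCommGroup Y] [Module k Y]
    (aX : H ⊗[k] X →ₗ[k] X) (aY : H ⊗[k] Y →ₗ[k] Y) :
    ydHalfBraiding ΔV (tAct aX aY) =
      (TensorProduct.assoc k X Y V).symm.toLinearMap ∘ₗ
        TensorProduct.map LinearMap.id (ydHalfBraiding ΔV aY) ∘ₗ
        (TensorProduct.assoc k X V Y).toLinearMap ∘ₗ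
        TensorProduct.map (ydHalfBraiding ΔV aX) LinearMap.id ∘ₗ
        (TensorProduct.assoc k V X Y).symm.toLinearMap := by
  refine TensorProduct.ext' fun v t => ?_
  induction t with
  | zero => simp
  | add a b ha hb => simp only [TensorProduct.tmul_add, map_add] at ha hb ⊢; rw [ha, hb]
  | tmul x y =>
    have hco' := congrArg ((TensorProduct.comm k V (X ⊗[k] Y)).toLinearMap ∘ₗ
      TensorProduct.map (LinearMap.id (M := V))
        (TensorProduct.map (aX ∘ₗ (TensorProduct.mk k H X).flip x)
          (aY ∘ₗ (TensorProduct.mk k H Y).flip y) ∘ₗ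
          TensorProduct.map (antipode k) (antipode k) ∘ₗ
          (TensorProduct.comm k H H).toLinearMap)) (hco.sweedler_eq v)
    simp only [map_sum, TensorProduct.map_tmul, LinearMap.id_coe, id_eq, LinearMap.coe_comp,
      Function.comp_apply, LinearEquiv.coe_coe, TensorProduct.comm_tmul,
      TensorProduct.mk_apply, LinearMap.flip_apply] at hco'
    simp only [ydHalfBraiding_tmul _ (sum_rep (ΔV _)).symm,
      tAct_tmul _ _ (comul_antipode _), LinearMap.coe_comp, Function.comp_apply,
      LinearEquiv.coe_coe, TensorProduct.assoc_symm_tmul, TensorProduct.sum_tmul, map_sum,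
      TensorProduct.map_tmul, LinearMap.id_coe, id_eq, TensorProduct.assoc_tmul,
      TensorProduct.tmul_sum]
    exact hco'.symm

lemma ydHalfBraiding_coaction (hco : YDCoassoc k H V ΔV) (hcu : YDCounital k H V ΔV) (v : V) :
    ydHalfBraiding ΔV (LinearMap.mul' k H) (ΔV v) = (1 : H) ⊗ₜ[k] v := by
  have hco' := congrArg ((TensorProduct.comm k V H).toLinearMap ∘ₗ
    TensorProduct.map (LinearMap.id (M := V))
      (LinearMap.mul' k H ∘ₗ TensorProduct.map (antipode k) LinearMap.id)) (hco.sweedler_eq v)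
  simp only [map_sum, TensorProduct.map_tmul, LinearMap.id_coe, id_eq, LinearMap.coe_comp,
    Function.comp_apply, LinearMap.mul'_apply, LinearEquiv.coe_coe, TensorProduct.comm_tmul] at hco'
  have hcontract : ∀ p ∈ rep (ΔV v),
      ∑ r ∈ rep (comul (R := k) p.2), (antipode k r.1 * r.2) ⊗ₜ[k] p.1 =
        (1 : H) ⊗ₜ[k] (counit (R := k) p.2 • p.1) := fun p _ => by
    rw [← TensorProduct.sum_tmul, sum_antipode_mul, Algebra.algebraMap_eq_smul_one,
      TensorProduct.smul_tmul]
  conv_lhs => rw [← sum_rep (ΔV v), map_sum]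
  simp only [ydHalfBraiding_tmul _ (sum_rep (ΔV _)).symm, LinearMap.mul'_apply]
  rw [hco', Finset.sum_congr rfl hcontract, ← TensorProduct.tmul_sum, hcu.sum_counit_smul]

lemma isHalfBraiding_ydHalfBraiding {aV : H →ₗ[k] V →ₗ[k] V} (hco : YDCoassoc k H V ΔV)
    (hcu : YDCounital k H V ΔV) (hcr : YDCrossing k H V aV ΔV) :
    IsHalfBraiding V aV (fun _ _ _ aX => ydHalfBraiding ΔV aX) := by
  refine ⟨fun _ _ _ aX hone hmul => ⟨?_, ?_⟩, fun _ _ _ aX hone hmul =>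
      ydHalfBraiding_comp_tAct hco hcu hcr aX hone hmul, isNaturalFamily_ydHalfBraiding ΔV,
    fun _ _ _ _ _ _ aX aY => ydHalfBraiding_tAct hco aX aY⟩
  · exact Function.LeftInverse.injective (ydHalfBraidingInv_ydHalfBraiding aX hco hcu hone hmul)
  · exact Function.RightInverse.surjective (ydHalfBraiding_ydHalfBraidingInv aX hco hcu hone hmul)

lemma ydHalfBraiding_natural_iff_comp_coaction {W : Type u} [AddCommGroup W] [Module k W]
    {ΔW : W →ₗ[k] W ⊗[k] H} (hcoV : YDCoassoc k H V ΔV) (hcuV : YDCounital k H V ΔV)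
    (hcoW : YDCoassoc k H W ΔW) (hcuW : YDCounital k H W ΔW) (f : V →ₗ[k] W) :
    (∀ (X : Type u) [AddCommGroup X] [Module k X] (aX : H ⊗[k] X →ₗ[k] X),
        (∀ x : X, aX (1 ⊗ₜ x) = x) →
        (∀ (g h : H) (x : X), aX ((g * h) ⊗ₜ x) = aX (g ⊗ₜ aX (h ⊗ₜ x))) →
        TensorProduct.map LinearMap.id f ∘ₗ ydHalfBraiding ΔV aX =
          ydHalfBraiding ΔW aX ∘ₗ TensorProduct.map f LinearMap.id) ↔
      TensorProduct.map f LinearMap.id ∘ₗ ΔV = ΔW ∘ₗ f := by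
  constructor
  · intro hnat
    refine LinearMap.ext fun v => ?_
    apply Function.LeftInverse.injective
      (ydHalfBraidingInv_ydHalfBraiding _ hcoW hcuW mul'_one_tmul mul'_mul_tmul)
    have h := LinearMap.congr_fun (hnat H (LinearMap.mul' k H) mul'_one_tmul mul'_mul_tmul) (ΔV v)
    simp only [LinearMap.coe_comp, Function.comp_apply, ydHalfBraiding_coaction hcoV hcuV,
      TensorProduct.map_tmul, LinearMap.id_coe, id_eq] at h ⊢
    rw [← h, ydHalfBraiding_coaction hcoW hcuW]
  · intro hcomod X _ _ aX _ _
    refine TensorProduct.ext' fun v x => ?_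
    have hfv : ΔW (f v) = ∑ p ∈ rep (ΔV v), f p.1 ⊗ₜ[k] p.2 := by
      rw [← LinearMap.comp_apply, ← hcomod, LinearMap.comp_apply]
      conv_lhs => rw [← sum_rep (ΔV v), map_sum]
      simp
    simp [ydHalfBraiding_tmul aX (sum_rep (ΔV v)).symm, ydHalfBraiding_tmul aX hfv]

end YetterDrinfeld

namespace IsHalfBraiding

open YetterDrinfeld

variable {k H} {V : Type u} [AddCommGroup V] [Module k V] {aV : H →ₗ[k] V →ₗ[k] V}
  {c : ∀ (X : Type u) [AddCommGroup X] [Module k X],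
    (H ⊗[k] X →ₗ[k] X) → (V ⊗[k] X →ₗ[k] X ⊗[k] V)}

lemma isNaturalFamily (hc : IsHalfBraiding V aV c) : IsNaturalFamily c := hc.2.2.1

lemma bijective_regular (hc : IsHalfBraiding V aV c) :
    Function.Bijective (c H (LinearMap.mul' k H)) :=
  hc.1 H _ mul'_one_tmul mul'_mul_tmul

noncomputable def coaction (hc : IsHalfBraiding V aV c) : V →ₗ[k] V ⊗[k] H :=
  (LinearEquiv.ofBijective _ hc.bijective_regular).symm.toLinearMap ∘ₗ TensorProduct.mk k H V 1

lemma apply_coaction (hc : IsHalfBraiding V aV c) (v : V) :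
    c H (LinearMap.mul' k H) (hc.coaction v) = (1 : H) ⊗ₜ v :=
  (LinearEquiv.ofBijective _ hc.bijective_regular).apply_symm_apply _

lemma apply_map_mulRight_coaction (hc : IsHalfBraiding V aV c) (a : H) (v : V) :
    c H (LinearMap.mul' k H) (TensorProduct.map LinearMap.id (LinearMap.mulRight k a)
      (hc.coaction v)) = a ⊗ₜ v := by
  simp [hc.isNaturalFamily.apply_map_mulRight, apply_coaction]

/-- The component at the unit object `k` is trivial: naturality for the unitor `k ≅ k ⊗ k`
and the tensor axiom for `k ⊗ k` give `c_k (c_k (v ⊗ 1)) = c_k (v ⊗ 1)` up to unitors. -/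
lemma apply_tmul_one_trivial (hc : IsHalfBraiding V aV c) (v : V) :
    c k counitAct (v ⊗ₜ[k] (1 : k)) = (1 : k) ⊗ₜ v := by
  obtain ⟨hbij, -, hnat, htens⟩ := hc
  let γ : V → V := fun v => TensorProduct.lid k V (c k counitAct (v ⊗ₜ (1 : k)))
  have hγ : ∀ v, c k counitAct (v ⊗ₜ[k] (1 : k)) = (1 : k) ⊗ₜ γ v := fun v => by
    simp [γ, ← TensorProduct.lid_symm_apply]
  have hnat1 := LinearMap.congr_fun (hnat k (k ⊗[k] k) counitAct (tAct counitAct counitAct)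
    (TensorProduct.lid k k).symm.toLinearMap lid_symm_counitAct) (v ⊗ₜ (1 : k))
  have htens1 := LinearMap.congr_fun (htens k k counitAct counitAct) (v ⊗ₜ ((1 : k) ⊗ₜ (1 : k)))
  simp only [LinearMap.coe_comp, Function.comp_apply, hγ, TensorProduct.map_tmul,
    LinearMap.id_coe, id_eq, LinearEquiv.coe_coe, TensorProduct.lid_symm_apply,
    TensorProduct.assoc_symm_tmul, TensorProduct.assoc_tmul] at hnat1 htens1
  have hγγ : γ (γ v) = γ v := by
    simpa using congrArg (TensorProduct.lid k V ∘ TensorProduct.map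
      (TensorProduct.lid k k).toLinearMap LinearMap.id) (hnat1.trans htens1).symm
  have hγv : γ v = v := by
    have := (hbij k counitAct counitAct_one_tmul counitAct_mul_tmul).injective
      ((hγ (γ v)).trans ((congrArg _ hγγ).trans (hγ v).symm))
    exact TensorProduct.rid k V |>.symm.injective (by simpa using this)
  rw [hγ, hγv]

lemma coaction_counital (hc : IsHalfBraiding V aV c) : YDCounital k H V hc.coaction := by
  refine LinearMap.ext fun v => ?_
  have hε := LinearMap.congr_fun (hc.isNaturalFamily H k (LinearMap.mul' k H) counitAct counit
    fun h x => by simp [counitAct_tmul, mul_comm]) (hc.coaction v)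
  set w := TensorProduct.rid k V (TensorProduct.map LinearMap.id counit (hc.coaction v))
  have hw : TensorProduct.map LinearMap.id counit (hc.coaction v) = w ⊗ₜ[k] (1 : k) := by
    rw [← TensorProduct.rid_symm_apply, LinearEquiv.symm_apply_apply]
  simp only [LinearMap.coe_comp, Function.comp_apply, apply_coaction, TensorProduct.map_tmul,
    LinearMap.id_coe, id_eq, Bialgebra.counit_one, hw, hc.apply_tmul_one_trivial] at hε
  simpa using (congrArg (TensorProduct.lid k V) hε).symm

lemma coaction_coassoc (hc : IsHalfBraiding V aV c) : YDCoassoc k H V hc.coaction := by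
  refine LinearMap.ext fun v => ?_
  apply (hc.1 (H ⊗[k] H) _ tAct_mul'_mul'_one_tmul tAct_mul'_mul'_mul_tmul).injective
  have hδ := LinearMap.congr_fun (hc.isNaturalFamily H (H ⊗[k] H) (LinearMap.mul' k H)
    (tAct (LinearMap.mul' k H) (LinearMap.mul' k H)) comul
    fun h x => by simp [tAct_mul'_mul', Bialgebra.comul_mul]) (hc.coaction v)
  have htens := LinearMap.congr_fun (hc.2.2.2 H H (LinearMap.mul' k H) (LinearMap.mul' k H))
    (TensorProduct.assoc k V H H (TensorProduct.map hc.coaction LinearMap.id (hc.coaction v)))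
  have hleg : TensorProduct.map (c H (LinearMap.mul' k H)) LinearMap.id
      (TensorProduct.map hc.coaction LinearMap.id (hc.coaction v)) =
      (TensorProduct.assoc k H V H).symm ((1 : H) ⊗ₜ hc.coaction v) := by
    rw [TensorProduct.map_map, ← sum_rep (hc.coaction v), map_sum, TensorProduct.tmul_sum, map_sum]
    simp [apply_coaction]
  simp only [LinearMap.coe_comp, Function.comp_apply, LinearEquiv.coe_coe,
    LinearEquiv.symm_apply_apply, hleg, LinearEquiv.apply_symm_apply, TensorProduct.map_tmul,
    LinearMap.id_coe, id_eq, apply_coaction, TensorProduct.assoc_symm_tmul,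
    Bialgebra.comul_one] at hδ htens ⊢
  rw [htens, ← hδ, Algebra.TensorProduct.one_def]

lemma coaction_crossing (hc : IsHalfBraiding V aV c) : YDCrossing k H V aV hc.coaction := by
  refine TensorProduct.ext' fun h v => ?_
  apply hc.bijective_regular.injective
  have hmulRight : ∀ (a : H) (t : V ⊗[k] H),
      TensorProduct.map LinearMap.id (LinearMap.mul' k H)
        (TensorProduct.assoc k V H H (TensorProduct.comm k H (V ⊗[k] H) (a ⊗ₜ t))) =
      TensorProduct.map LinearMap.id (LinearMap.mulRight k a) t := fun a t => by
    induction t with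
    | zero => simp
    | add x y hx hy => simp only [TensorProduct.tmul_add, map_add, hx, hy]
    | tmul u b => simp
  have hlin := LinearMap.congr_fun (hc.2.1 H _ mul'_one_tmul mul'_mul_tmul) (h ⊗ₜ hc.coaction v)
  simp only [LinearMap.coe_comp, Function.comp_apply, TensorProduct.map_tmul, LinearMap.id_coe,
    id_eq, apply_coaction, tAct_tmul _ _ (sum_rep (comul (R := k) (A := H) h)).symm,
    LinearMap.mul'_apply, mul_one, TensorProduct.lift.tmul] at hlin
  rw [tAct] at hlin
  simp only [LinearMap.coe_comp, Function.comp_apply, LinearEquiv.coe_coe,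
    TensorProduct.map_tmul, LinearMap.id_coe, id_eq] at hlin
  simp only [LinearMap.coe_comp, Function.comp_apply, LinearEquiv.coe_coe, TensorProduct.map_tmul,
    LinearMap.id_coe, id_eq, hlin]
  conv_rhs => rw [← sum_rep (comul h)]
  simp only [TensorProduct.sum_tmul, map_sum, TensorProduct.assoc_tmul, TensorProduct.map_tmul,
    LinearMap.id_coe, id_eq, TensorProduct.lift.tmul, hmulRight, apply_map_mulRight_coaction]

/-- Both `c_H` and the half-braiding of `Δ` are left inverse to `c_H⁻¹`, whose values
`c_H⁻¹ (a ⊗ v) = v₍₀₎ ⊗ v₍₁₎ a` are forced by naturality for right multiplications. -/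
lemma regular_eq_ydHalfBraiding (hc : IsHalfBraiding V aV c) :
    c H (LinearMap.mul' k H) = ydHalfBraiding hc.coaction (LinearMap.mul' k H) := by
  set e := LinearEquiv.ofBijective _ hc.bijective_regular
  have hsymm : ydHalfBraiding hc.coaction (LinearMap.mul' k H) ∘ₗ e.symm.toLinearMap =
      LinearMap.id := by
    refine TensorProduct.ext' fun a w => ?_
    have he : e.symm (a ⊗ₜ w) =
        TensorProduct.map LinearMap.id (LinearMap.mulRight k a) (hc.coaction w) := by
      rw [LinearEquiv.symm_apply_eq]
      exact (hc.apply_map_mulRight_coaction a w).symm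
    simp [he, (isNaturalFamily_ydHalfBraiding _).apply_map_mulRight,
      ydHalfBraiding_coaction hc.coaction_coassoc hc.coaction_counital]
  refine LinearMap.ext fun t => ?_
  simpa [e] using (LinearMap.congr_fun hsymm (e t)).symm

lemma eq_ydHalfBraiding (hc : IsHalfBraiding V aV c) {X : Type u} [AddCommGroup X] [Module k X]
    (aX : H ⊗[k] X →ₗ[k] X) (hone : ∀ x : X, aX (1 ⊗ₜ x) = x)
    (hmul : ∀ (g h : H) (x : X), aX ((g * h) ⊗ₜ x) = aX (g ⊗ₜ aX (h ⊗ₜ x))) :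
    c X aX = ydHalfBraiding hc.coaction aX :=
  hc.isNaturalFamily.eq_of_regular (isNaturalFamily_ydHalfBraiding _)
    hc.regular_eq_ydHalfBraiding aX hone hmul

end IsHalfBraiding

theorem yd_iso_center
    (V : Type u) [AddCommGroup V] [Module k V]
    (aV : H →ₗ[k] V →ₗ[k] V) :
    -- from the center to Yetter-Drinfeld modules, and back
    (∀ c, IsHalfBraiding V aV c →
      ∃! ΔV : V →ₗ[k] V ⊗[k] H,
        (∀ v : V, c H (LinearMap.mul' k H) (ΔV v) = (1 : H) ⊗ₜ v) ∧
        YDCoassoc k H V ΔV ∧ YDCounital k H V ΔV ∧ YDCrossing k H V aV ΔV ∧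
        (∀ (X : Type u) [AddCommGroup X] [Module k X] (aX : H ⊗[k] X →ₗ[k] X),
          (∀ x : X, aX (1 ⊗ₜ x) = x) →
          (∀ (g h : H) (x : X), aX ((g * h) ⊗ₜ x) = aX (g ⊗ₜ aX (h ⊗ₜ x))) →
          c X aX = ydHalfBraiding ΔV aX)) ∧
    -- from Yetter-Drinfeld modules to the center, and back
    (∀ ΔV : V →ₗ[k] V ⊗[k] H,
      YDCoassoc k H V ΔV → YDCounital k H V ΔV → YDCrossing k H V aV ΔV →
      IsHalfBraiding V aV (fun X _ _ aX => ydHalfBraiding ΔV aX) ∧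
      (∀ v : V, ydHalfBraiding ΔV (LinearMap.mul' k H) (ΔV v) = (1 : H) ⊗ₜ v)) ∧
    -- the correspondence of morphisms
    (∀ (W : Type u) [AddCommGroup W] [Module k W]
        (aW : H →ₗ[k] W →ₗ[k] W) (_ : IsAction k H W aW)
        (ΔV : V →ₗ[k] V ⊗[k] H) (ΔW : W →ₗ[k] W ⊗[k] H),
      YDCoassoc k H V ΔV → YDCounital k H V ΔV → YDCrossing k H V aV ΔV →
      YDCoassoc k H W ΔW → YDCounital k H W ΔW → YDCrossing k H W aW ΔW →
      ∀ f : V →ₗ[k] W, (∀ (h : H) (v : V), f (aV h v) = aW h (f v)) →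
        ((∀ (X : Type u) [AddCommGroup X] [Module k X] (aX : H ⊗[k] X →ₗ[k] X),
            (∀ x : X, aX (1 ⊗ₜ x) = x) →
            (∀ (g h : H) (x : X), aX ((g * h) ⊗ₜ x) = aX (g ⊗ₜ aX (h ⊗ₜ x))) →
            (TensorProduct.map LinearMap.id f) ∘ₗ ydHalfBraiding ΔV aX =
              ydHalfBraiding ΔW aX ∘ₗ (TensorProduct.map f LinearMap.id)) ↔
          (TensorProduct.map f LinearMap.id) ∘ₗ ΔV = ΔW ∘ₗ f)) := by
  refine ⟨fun c hc => ⟨hc.coaction, ⟨hc.apply_coaction, hc.coaction_coassoc, hc.coaction_counital,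
      hc.coaction_crossing, fun _ _ _ => hc.eq_ydHalfBraiding⟩,
      fun ΔV hΔV => LinearMap.ext fun v =>
        hc.bijective_regular.injective ((hΔV.1 v).trans (hc.apply_coaction v).symm)⟩,
    fun ΔV hco hcu hcr => ⟨YetterDrinfeld.isHalfBraiding_ydHalfBraiding hco hcu hcr,
      YetterDrinfeld.ydHalfBraiding_coaction hco hcu⟩,
    fun W _ _ aW _ ΔV ΔW hcoV hcuV _ hcoW hcuW _ f _ =>
      YetterDrinfeld.ydHalfBraiding_natural_iff_comp_coaction hcoV hcuV hcoW hcuW f⟩
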